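/- arXiv:1903.11841 — 2 statements merged into one kernel-verified Lean document; each statement's English description precedes it below -/
import Mathlib

section
/- Let 𝒜⁰ = { x ∈ ℝ⁶ : x ≠ 0 and Ric(x) = 0 }, equipped with the subspace topology from ℝ⁶, where Ric(a,b,c,d,e,f) is the symmetric 2×2 matrix with entries Ric₁₁ = (a−d)d + b(f−c), Ric₁₂ = Ric₂₁ = cd − be, Ric₂₂ = c(f−c) + (a−d)e. Then 𝒜⁰ is homeomorphic to the quotient of ℝ × (ℝ³ ∖ {0}) by the ℤ-action in which n ∈ ℤ sends (θ, x₁, x₂, x₃) to (θ + nπ, (−1)ⁿx₁, x₂, x₃); this quotient is the total space of the Whitney sum of the Möbius line bundle and two trivial line bundles over the circle, minus its zero section. -/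
/-- The space of Type A models: `(a,b,c,d,e,f)` records the Christoffel symbols. -/
abbrev R6 : Type := ℝ × ℝ × ℝ × ℝ × ℝ × ℝ

/-- The Ricci tensor of the Type A model with Christoffel symbols `(a,b,c,d,e,f)`. -/
def Ric : R6 → Matrix (Fin 2) (Fin 2) ℝ
  | (a, b, c, d, e, f) =>
    !![(a-d)*d + b*(f-c), c*d - b*e; c*d - b*e, c*(f-c) + (a-d)*e]

/-- The set of nonzero flat Type A models, with the subspace topology from ℝ⁶. -/
def A0 : Set R6 := {x | x ≠ 0 ∧ Ric x = 0}

/-- The ℤ-action identification on ℝ × (ℝ³ ∖ {0}):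
`n` sends `(θ, x₁, x₂, x₃)` to `(θ + nπ, (−1)ⁿ x₁, x₂, x₃)`. -/
def rel (x y : {p : ℝ × (ℝ × ℝ × ℝ) // p.2 ≠ 0}) : Prop :=
  ∃ n : ℤ, y.1.1 = x.1.1 + n * Real.pi ∧
    y.1.2.1 = (-1 : ℝ)^n * x.1.2.1 ∧
    y.1.2.2.1 = x.1.2.2.1 ∧ y.1.2.2.2 = x.1.2.2.2

/-!
Read `(a, b, c, d, e, f)` as the real 2 × 3 matrix whose columns, viewed in `ℂ ≅ ℝ²`, are
`d + ib`, `e + ic` and `(f - c) + i(d - a)`. The three Ricci components are, up to sign, the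
2 × 2 minors of this matrix, so `A0` is the space of real 2 × 3 matrices of rank one, i.e. of
products `u cᵀ` with `u` a unit vector and `c ∈ ℝ³ ∖ {0}`, where `(u, c)` and `(-u, -c)` give the
same matrix. Taking `u = e^{iθ}` and `c = (x₁, Re w, Im w)` with `w = e^{iθ}(x₂ + ix₃)`, the pairs
giving the same matrix are exactly those related by `rel`. The parametrization is a quotient map
since it has continuous local sections: near a matrix with a nonzero column `w₀`, a continuous
branch of the argument of that column gives `θ`, and `θ` determines `c`.
-/

open Complex ComplexConjugate Real Topology

section QuotientMap

variable {X Y : Type*} [TopologicalSpace X] [TopologicalSpace Y] {f : X → Y}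

theorem Topology.IsQuotientMap.of_localSections (hf : Continuous f)
    (hσ : ∀ y, ∃ U : Set Y, IsOpen U ∧ y ∈ U ∧ ∃ σ : U → X, Continuous σ ∧ ∀ u, f (σ u) = u) :
    IsQuotientMap f := by
  refine ⟨isCoinducing_iff.mpr fun s => ⟨fun hs => ?_, fun hs => hs.preimage hf⟩, fun y => ?_⟩
  · refine isOpen_iff_forall_mem_open.mpr fun y hy => ?_
    obtain ⟨U, hU, hyU, σ, hσc, hσf⟩ := hσ y
    refine ⟨(↑) '' (σ ⁻¹' (f ⁻¹' s)), ?_, hU.isOpenMap_subtype_val _ (hs.preimage hσc),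
      ⟨⟨y, hyU⟩, by simp [hσf, hy], rfl⟩⟩
    rintro _ ⟨u, hu, rfl⟩
    simpa [hσf] using hu
  · obtain ⟨U, -, hyU, σ, -, hσf⟩ := hσ y
    exact ⟨σ ⟨y, hyU⟩, hσf _⟩

noncomputable def Topology.IsQuotientMap.homeomorphQuot (hf : IsQuotientMap f)
    {r : X → X → Prop} (hr : ∀ x x', r x x' ↔ f x = f x') : Quot r ≃ₜ Y :=
  (Homeomorph.Quot.congrRight hr).trans (hf.homeomorph (f := ⟨f, hf.continuous⟩))

end QuotientMap

@[fun_prop]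
theorem Continuous.complex_mk {X : Type*} [TopologicalSpace X] {g h : X → ℝ}
    (hg : Continuous g) (hh : Continuous h) : Continuous fun x => (⟨g x, h x⟩ : ℂ) :=
  equivRealProdCLM.symm.continuous.comp (hg.prodMk hh)

namespace Complex

theorem im_mul_conj_eq_zero_of_ofReal_mul_eq {c c' : ℝ} {u u' : ℂ} (h : (c : ℂ) * u = c' * u')
    (hc : c ≠ 0) : (u * conj u').im = 0 := by
  have h' := congrArg (fun z => (z * conj u').im) h
  simp only [mul_assoc, mul_conj, im_ofReal_mul, ofReal_im, mul_zero] at h'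
  exact (mul_eq_zero.mp h').resolve_left hc

theorem exp_mul_I_mul_conj (θ : ℝ) : cexp (θ * I) * conj (cexp (θ * I)) = 1 := by
  rw [mul_conj', norm_exp_ofReal_mul_I, ofReal_one, one_pow]

theorem im_exp_mul_I_mul_conj (θ θ' : ℝ) :
    (cexp (θ * I) * conj (cexp (θ' * I))).im = Real.sin (θ - θ') := by
  rw [← exp_conj, map_mul, conj_ofReal, conj_I, ← Complex.exp_add,
    show (θ : ℂ) * I + θ' * -I = (θ - θ' : ℝ) * I by push_cast; ring, exp_ofReal_mul_I_im]

theorem exp_add_int_mul_pi_mul_I (θ : ℝ) (n : ℤ) :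
    cexp ((θ + n * π : ℝ) * I) = ((-1 : ℝ) ^ n : ℝ) * cexp (θ * I) := by
  rw [show ((θ + n * π : ℝ) : ℂ) * I = n * (π * I) + θ * I by push_cast; ring, Complex.exp_add,
    exp_int_mul, exp_pi_mul_I]
  push_cast
  rfl

/-- A branch of the argument whose cut is the ray opposite to `w₀`. -/
noncomputable def localArg (w₀ z : ℂ) : ℝ := arg (z * conj w₀) + arg w₀

theorem norm_mul_exp_localArg {w₀ : ℂ} (hw₀ : w₀ ≠ 0) (z : ℂ) :
    ‖z‖ * cexp (localArg w₀ z * I) = z := by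
  have hz := norm_mul_exp_arg_mul_I (z * conj w₀)
  have hw := norm_mul_exp_arg_mul_I w₀
  rw [norm_mul, norm_conj, ofReal_mul] at hz
  have hw₀' : (‖w₀‖ : ℂ) ^ 2 ≠ 0 := by simpa using hw₀
  apply mul_left_cancel₀ hw₀'
  rw [localArg, ofReal_add, add_mul, Complex.exp_add]
  linear_combination (‖w₀‖ * cexp (arg w₀ * I)) * hz + z * conj w₀ * hw + z * mul_conj' w₀

theorem continuousOn_localArg (w₀ : ℂ) :
    ContinuousOn (localArg w₀) {z | z * conj w₀ ∈ slitPlane} :=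
  (continuousOn_arg.comp (continuous_mul_const _).continuousOn fun _ hz => hz).add
    continuousOn_const

theorem mul_conj_self_mem_slitPlane {w : ℂ} (hw : w ≠ 0) : w * conj w ∈ slitPlane := by
  rw [mul_conj', ← ofReal_pow, ofReal_mem_slitPlane]
  exact pow_pos (norm_pos_iff.mpr hw) 2

end Complex

theorem neg_one_zpow_mul_self (n : ℤ) : (-1 : ℝ) ^ n * (-1) ^ n = 1 := by
  rw [← mul_zpow]; norm_num

noncomputable section

namespace TypeA

def columns : R6 ≃ₜ (Fin 3 → ℂ) where
  toFun := fun (a, b, c, d, e, f) => ![⟨d, b⟩, ⟨e, c⟩, ⟨f - c, d - a⟩]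
  invFun v := ((v 0).re - (v 2).im, (v 0).im, (v 1).im, (v 0).re, (v 1).re, (v 2).re + (v 1).im)
  left_inv := fun (a, b, c, d, e, f) => by simp
  right_inv v := by ext j : 1; fin_cases j <;> simp
  continuous_toFun := by
    refine continuous_pi fun j => ?_
    fin_cases j <;> (dsimp; fun_prop)
  continuous_invFun := by fun_prop

/-- `(v i * conj (v j)).im` is the 2 × 2 minor on the columns `j, i` of the real 2 × 3 matrix
with columns `v`. -/
def RankLeOne (v : Fin 3 → ℂ) : Prop := ∀ i j, (v i * conj (v j)).im = 0

theorem ric_eq_zero_iff (y : R6) : Ric y = 0 ↔ RankLeOne (columns y) := by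
  obtain ⟨a, b, c, d, e, f⟩ := y
  constructor
  · intro h i j
    have h₁₁ := congrFun (congrFun h 0) 0
    have h₁₂ := congrFun (congrFun h 0) 1
    have h₂₂ := congrFun (congrFun h 1) 1
    simp only [Ric] at h₁₁ h₁₂ h₂₂
    fin_cases i <;> fin_cases j <;> simp [columns] at h₁₁ h₁₂ h₂₂ ⊢ <;> linarith
  · intro h
    have h₀₂ := h 0 2
    have h₁₀ := h 1 0
    have h₁₂ := h 1 2
    simp [columns] at h₀₂ h₁₀ h₁₂
    ext i j
    fin_cases i <;> fin_cases j <;> simp [Ric] <;> linarith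

theorem rankLeOne_ofReal_mul (c : Fin 3 → ℝ) (u : ℂ) : RankLeOne fun j => (c j : ℂ) * u := by
  intro i j
  rw [map_mul, conj_ofReal, show (c i : ℂ) * u * (c j * conj u) = (c i * c j : ℝ) * (u * conj u)
    by push_cast; ring, mul_conj, ← ofReal_mul, ofReal_im]

theorem im_mul_conj_eq_zero_of_rankLeOne {u : ℂ} {v : Fin 3 → ℂ} (hv : RankLeOne v) {k : Fin 3}
    (hk : v k ≠ 0) {r : ℝ} (hr : r * u = v k) (j : Fin 3) : (v j * conj u).im = 0 := by
  have hr₀ : r ≠ 0 := by rintro rfl; simp [← hr] at hk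
  have h := hv j k
  rw [← hr, map_mul, conj_ofReal, mul_left_comm, im_ofReal_mul] at h
  exact (mul_eq_zero.mp h).resolve_left hr₀

def cone : Set (Fin 3 → ℂ) := {v | v ≠ 0 ∧ RankLeOne v}

def a0HomeomorphCone : A0 ≃ₜ cone :=
  columns.subtype fun y =>
    and_congr (columns.injective.ne_iff' (by simp [columns]; rfl)).symm (ric_eq_zero_iff y)

/-- Rotating `(x₂, x₃)` by `u` makes `(-u, (-x₁, x₂, x₃))` give the same columns as `(u, x)`. -/
def coeffs (u : ℂ) (x : ℝ × ℝ × ℝ) : Fin 3 → ℝ :=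
  ![x.1, (u * ⟨x.2.1, x.2.2⟩).re, (u * ⟨x.2.1, x.2.2⟩).im]

def paramAlong (u : ℂ) (x : ℝ × ℝ × ℝ) (j : Fin 3) : ℂ := coeffs u x j * u

def coordsAlong (u : ℂ) (v : Fin 3 → ℂ) : ℝ × ℝ × ℝ :=
  let z := conj u * ⟨(v 1 * conj u).re, (v 2 * conj u).re⟩
  ((v 0 * conj u).re, z.re, z.im)

theorem paramAlong_zero (u : ℂ) : paramAlong u 0 = 0 := by
  funext j; fin_cases j <;> simp [paramAlong, coeffs]

section Along

variable {u : ℂ}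

theorem coordsAlong_paramAlong (hu : u * conj u = 1) (x : ℝ × ℝ × ℝ) :
    coordsAlong u (paramAlong u x) = x := by
  have h : ∀ j, paramAlong u x j * conj u = coeffs u x j := fun j => by
    rw [paramAlong, mul_assoc, hu, mul_one]
  obtain ⟨x₁, x₂, x₃⟩ := x
  simp only [coordsAlong, h, ofReal_re]
  rw [show (⟨coeffs u _ 1, coeffs u _ 2⟩ : ℂ) = u * ⟨x₂, x₃⟩ from rfl, ← mul_assoc,
    mul_comm (conj u), hu, one_mul]
  rfl

theorem paramAlong_injective (hu : u * conj u = 1) : Function.Injective (paramAlong u) :=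
  Function.LeftInverse.injective (coordsAlong_paramAlong hu)

theorem paramAlong_coordsAlong (hu : u * conj u = 1) {v : Fin 3 → ℂ}
    (hv : ∀ j, (v j * conj u).im = 0) : paramAlong u (coordsAlong u v) = v := by
  have hcoeffs : coeffs u (coordsAlong u v) = fun j => (v j * conj u).re := by
    have hw : u * ⟨(coordsAlong u v).2.1, (coordsAlong u v).2.2⟩ =
        ⟨(v 1 * conj u).re, (v 2 * conj u).re⟩ := by
      rw [coordsAlong, ← mul_assoc, hu, one_mul]
    ext j
    fin_cases j
    · rfl
    · exact (congrArg re hw).trans rfl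
    · exact (congrArg im hw).trans rfl
  funext j
  have hre : ((v j * conj u).re : ℂ) = v j * conj u := Complex.ext rfl (by simp [hv j])
  rw [paramAlong, hcoeffs, hre, mul_assoc, mul_comm (conj u), hu, mul_one]

theorem paramAlong_ofReal_mul {ε : ℝ} (hε : ε * ε = 1) (x : ℝ × ℝ × ℝ) :
    paramAlong (ε * u) x = paramAlong u (ε * x.1, x.2) := by
  funext j
  obtain rfl | rfl := mul_self_eq_one_iff.mp hε <;>
    fin_cases j <;> simp [paramAlong, coeffs] <;> ring

end Along

def param (p : ℝ × ℝ × ℝ × ℝ) : Fin 3 → ℂ := paramAlong (cexp (p.1 * I)) p.2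

theorem param_add_int_mul_pi (θ : ℝ) (n : ℤ) (x : ℝ × ℝ × ℝ) :
    param (θ + n * π, x) = param (θ, ((-1) ^ n * x.1, x.2)) :=
  (congrArg (paramAlong · x) (exp_add_int_mul_pi_mul_I θ n)).trans
    (paramAlong_ofReal_mul (neg_one_zpow_mul_self n) x)

theorem param_ne_zero {θ : ℝ} {x : ℝ × ℝ × ℝ} (hx : x ≠ 0) : param (θ, x) ≠ 0 := fun h =>
  hx (paramAlong_injective (exp_mul_I_mul_conj θ) (h.trans (paramAlong_zero _).symm))

theorem exists_eq_add_int_mul_pi_of_param_eq {θ θ' : ℝ} {x x' : ℝ × ℝ × ℝ} (hx : x ≠ 0)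
    (h : param (θ, x) = param (θ', x')) : ∃ n : ℤ, θ' = θ + n * π := by
  obtain ⟨j, hj⟩ : ∃ j, coeffs (cexp (θ * I)) x j ≠ 0 := by
    by_contra! h₀
    exact param_ne_zero (θ := θ) hx (funext fun j => by simp [param, paramAlong, h₀ j])
  have hsin := im_mul_conj_eq_zero_of_ofReal_mul_eq (congrFun h j) hj
  rw [im_exp_mul_I_mul_conj, Real.sin_eq_zero_iff] at hsin
  obtain ⟨n, hn⟩ := hsin
  exact ⟨-n, by push_cast; linarith⟩

theorem param_eq_param_iff {θ θ' : ℝ} {x x' : ℝ × ℝ × ℝ} (hx : x ≠ 0) :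
    param (θ, x) = param (θ', x') ↔ ∃ n : ℤ, (θ', x') = (θ + n * π, ((-1) ^ n * x.1, x.2)) := by
  constructor
  · intro h
    obtain ⟨n, rfl⟩ := exists_eq_add_int_mul_pi_of_param_eq hx h
    rw [param_add_int_mul_pi] at h
    obtain rfl := paramAlong_injective (exp_mul_I_mul_conj θ) h
    exact ⟨n, by simp [← mul_assoc, neg_one_zpow_mul_self]⟩
  · rintro ⟨n, h⟩
    rw [h, param_add_int_mul_pi, ← mul_assoc, neg_one_zpow_mul_self, one_mul]

theorem continuous_coordsAlong_exp :
    Continuous fun p : ℝ × (Fin 3 → ℂ) => coordsAlong (cexp (p.1 * I)) p.2 := by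
  unfold coordsAlong; fun_prop

abbrev Params : Type := {p : ℝ × (ℝ × ℝ × ℝ) // p.2 ≠ 0}

def paramCone (p : Params) : cone :=
  ⟨param p.1, param_ne_zero p.2, rankLeOne_ofReal_mul _ _⟩

theorem continuous_paramCone : Continuous paramCone := by
  refine Continuous.subtype_mk (continuous_pi fun j => ?_) _
  fin_cases j <;> (simp [param, paramAlong, coeffs]; fun_prop)

theorem rel_iff_paramCone_eq (p q : Params) : rel p q ↔ paramCone p = paramCone q := by
  obtain ⟨⟨θ, x⟩, hx⟩ := p
  obtain ⟨⟨θ', x'⟩, -⟩ := q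
  rw [Subtype.ext_iff]
  change _ ↔ param (θ, x) = param (θ', x')
  rw [param_eq_param_iff hx]
  simp [rel, Prod.ext_iff, eq_comm]

theorem exists_localSection (v₀ : cone) : ∃ U : Set cone, IsOpen U ∧ v₀ ∈ U ∧
    ∃ σ : U → Params, Continuous σ ∧ ∀ v, paramCone (σ v) = v := by
  obtain ⟨k, hk⟩ : ∃ k, v₀.1 k ≠ 0 := Function.ne_iff.mp v₀.2.1
  let U : Set cone := {v | v.1 k * conj (v₀.1 k) ∈ slitPlane}
  let θ (v : U) : ℝ := localArg (v₀.1 k) (v.1.1 k)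
  have hsec (v : U) :
      paramAlong (cexp (θ v * I)) (coordsAlong (cexp (θ v * I)) v.1.1) = v.1.1 := by
    have hvk : v.1.1 k ≠ 0 := left_ne_zero_of_mul (slitPlane_ne_zero v.2)
    exact paramAlong_coordsAlong (exp_mul_I_mul_conj _)
      (im_mul_conj_eq_zero_of_rankLeOne v.1.2.2 hvk (norm_mul_exp_localArg hk _))
  have hval : Continuous fun v : U => v.1.1 := continuous_subtype_val.comp continuous_subtype_val
  have hθ : Continuous θ :=
    (continuousOn_localArg _).comp_continuous ((continuous_apply k).comp hval) fun v => v.2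
  let σ (v : U) : Params := ⟨(θ v, coordsAlong (cexp (θ v * I)) v.1.1), fun h => v.1.2.1 <| by
    rw [← hsec v, show coordsAlong _ _ = 0 from h, paramAlong_zero]⟩
  refine ⟨U, ?_, mul_conj_self_mem_slitPlane hk, σ, ?_, fun v => Subtype.ext (hsec v)⟩
  · exact isOpen_slitPlane.preimage
      (((continuous_apply k).comp continuous_subtype_val).mul continuous_const)
  · exact (hθ.prodMk (continuous_coordsAlong_exp.comp (hθ.prodMk hval))).subtype_mk _

theorem isQuotientMap_paramCone : IsQuotientMap paramCone :=
  .of_localSections continuous_paramCone exists_localSection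

end TypeA

end

theorem stmt_2 : Nonempty (A0 ≃ₜ Quot rel) :=
  ⟨TypeA.a0HomeomorphCone.trans
    (TypeA.isQuotientMap_paramCone.homeomorphQuot TypeA.rel_iff_paramCone_eq).symm⟩
end

section
/- Let Γ be the Christoffel symbols of the model ℳ₂¹(−1/2) = ℳ(−1,0,−1/2,0,0,0), i.e., Γ₁₁¹ = −1, Γ₁₂¹ = Γ₂₁¹ = −1/2, and all other symbols zero. Then a matrix T ∈ GL(2,ℝ) satisfies (T·Γ)ᵢⱼᵏ = Γᵢⱼᵏ for all i,j,k if and only if T is the identity or T is the matrix of the linear map T(x¹,x²) = (x¹ + x², −x²). -/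
/-!
For `Γ₀ = christoffel (-1) 0 (-1/2) 0 0 0` the product `Γ₀(x, y) = (xᵀ G y) e₁` is the symmetric
bilinear form with Gram matrix `G = modelGram` times the first basis vector. Clearing `T⁻¹`, the
isotropy condition says `T Γ₀(x, y) = Γ₀(Tx, Ty)`, i.e. `(T e₁) xᵀGy = (xᵀTᵀGTy) e₁`.
The second component forces `T₂₁ = 0`; the first then says `T₁₁ G = TᵀGT`, whose `(1,1)` entry
gives `T₁₁ = T₁₁²`, so `T₁₁ = 1` and `T` is an isometry of `G` fixing `e₁`. The remaining two
entries leave exactly the identity and `(x¹, x²) ↦ (x¹ + x², -x²)`.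
-/

open Matrix

/-- The Christoffel symbols of the Type A model `ℳ(a,b,c,d,e,f)`:
`christoffel a b c d e f i j k` is `Γ_{ij}{}^k` (indices `0,1` for `1,2`). -/
def christoffel (a b c d e f : ℝ) : Fin 2 → Fin 2 → Fin 2 → ℝ :=
  ![![![a, b], ![c, d]], ![![c, d], ![e, f]]]

/-- The action of `T ∈ GL(2,ℝ)` on constant Christoffel symbols:
`(T·Γ)ᵢⱼᵏ = Σ_{l,m,n} Tᵏ_l Γ_{mn}{}^l (T⁻¹)^m_i (T⁻¹)^n_j`. -/
noncomputable def glAct (T : GL (Fin 2) ℝ) (Γ : Fin 2 → Fin 2 → Fin 2 → ℝ) :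
    Fin 2 → Fin 2 → Fin 2 → ℝ := fun i j k =>
  ∑ l : Fin 2, ∑ m : Fin 2, ∑ n : Fin 2,
    (T : Matrix (Fin 2) (Fin 2) ℝ) k l * Γ m n l *
    ((T⁻¹ : GL (Fin 2) ℝ) : Matrix (Fin 2) (Fin 2) ℝ) m i *
    ((T⁻¹ : GL (Fin 2) ℝ) : Matrix (Fin 2) (Fin 2) ℝ) n j

def christoffelSlice (Γ : Fin 2 → Fin 2 → Fin 2 → ℝ) (k : Fin 2) : Matrix (Fin 2) (Fin 2) ℝ :=
  of fun i j => Γ i j k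

lemma christoffelSlice_christoffel (a b c d e f : ℝ) :
    christoffelSlice (christoffel a b c d e f) = ![!![a, c; c, e], !![b, d; d, f]] := by
  ext k i j
  fin_cases k <;> fin_cases i <;> fin_cases j <;> rfl

lemma Matrix.GeneralLinearGroup.transpose_inv_mul_mul_inv_eq_iff {n R : Type*} [Fintype n]
    [DecidableEq n] [CommRing R] (T : GL n R) (A B : Matrix n n R) :
    ((T⁻¹ : GL n R) : Matrix n n R)ᵀ * A * ((T⁻¹ : GL n R) : Matrix n n R) = B ↔
      A = (T : Matrix n n R)ᵀ * B * T := by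
  constructor <;> rintro rfl
  · simp only [← Matrix.mul_assoc, ← transpose_mul, T.inv_mul, transpose_one, Matrix.one_mul]
    simp [Matrix.mul_assoc]
  · simp only [← Matrix.mul_assoc, ← transpose_mul, T.mul_inv, transpose_one, Matrix.one_mul]
    simp [Matrix.mul_assoc]

lemma glAct_apply (T : GL (Fin 2) ℝ) (Γ : Fin 2 → Fin 2 → Fin 2 → ℝ) (i j k : Fin 2) :
    glAct T Γ i j k =
      (((T⁻¹ : GL (Fin 2) ℝ) : Matrix (Fin 2) (Fin 2) ℝ)ᵀ *
        (∑ l, (T : Matrix (Fin 2) (Fin 2) ℝ) k l • christoffelSlice Γ l) *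
        ((T⁻¹ : GL (Fin 2) ℝ) : Matrix (Fin 2) (Fin 2) ℝ)) i j := by
  simp only [glAct, christoffelSlice, mul_apply, Matrix.smul_apply, Matrix.add_apply, of_apply,
    transpose_apply, Fin.sum_univ_two, smul_eq_mul]
  ring

lemma glAct_eq_self_iff (T : GL (Fin 2) ℝ) (Γ : Fin 2 → Fin 2 → Fin 2 → ℝ) :
    glAct T Γ = Γ ↔ ∀ k, ∑ l, (T : Matrix (Fin 2) (Fin 2) ℝ) k l • christoffelSlice Γ l =
      (T : Matrix (Fin 2) (Fin 2) ℝ)ᵀ * christoffelSlice Γ k * T := by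
  simp_rw [← GeneralLinearGroup.transpose_inv_mul_mul_inv_eq_iff]
  simp only [← Matrix.ext_iff, funext_iff, glAct_apply, christoffelSlice, of_apply]
  exact ⟨fun h k i j => h i j k, fun h i j k => h k i j⟩

noncomputable def modelGram : Matrix (Fin 2) (Fin 2) ℝ := !![-1, -1/2; -1/2, 0]

lemma modelGram_ne_zero : modelGram ≠ 0 := by
  intro h
  simpa [modelGram] using congrFun (congrFun h 0) 0

lemma christoffelSlice_model :
    christoffelSlice (christoffel (-1) 0 (-1/2) 0 0 0) = ![modelGram, 0] := by
  rw [christoffelSlice_christoffel]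
  ext k i j
  fin_cases k <;> fin_cases i <;> fin_cases j <;> norm_num [modelGram]

lemma glAct_model_eq_self_iff (T : GL (Fin 2) ℝ) :
    glAct T (christoffel (-1) 0 (-1/2) 0 0 0) = christoffel (-1) 0 (-1/2) 0 0 0 ↔
      (T : Matrix (Fin 2) (Fin 2) ℝ) 1 0 = 0 ∧
        (T : Matrix (Fin 2) (Fin 2) ℝ) 0 0 • modelGram =
          (T : Matrix (Fin 2) (Fin 2) ℝ)ᵀ * modelGram * T := by
  simp [glAct_eq_self_iff, christoffelSlice_model, Fin.forall_fin_two, Fin.sum_univ_two,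
    modelGram_ne_zero, and_comm]

lemma smul_modelGram_eq_transpose_mul_mul_iff {a b c d : ℝ} (hdet : a * d - b * c ≠ 0) :
    (c = 0 ∧ a • modelGram = !![a, b; c, d]ᵀ * modelGram * !![a, b; c, d]) ↔
      !![a, b; c, d] = 1 ∨ !![a, b; c, d] = !![1, 1; 0, -1] := by
  simp only [modelGram, ← Matrix.ext_iff, Fin.forall_fin_two]
  simp only [Matrix.smul_apply, Matrix.mul_apply, transpose_apply, of_apply, cons_val', cons_val_zero,
    cons_val_one, cons_val_fin_one, Fin.sum_univ_two, smul_eq_mul, one_apply_eq, one_apply_ne,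
    zero_ne_one, one_ne_zero, ne_eq, not_false_eq_true]
  constructor
  · rintro ⟨rfl, ⟨h₀₀, h₀₁⟩, -, h₁₁⟩
    have ha₀ : a ≠ 0 := left_ne_zero_of_mul (by simpa using hdet)
    have ha : a = 1 := mul_left_cancel₀ ha₀ (by linear_combination h₀₀)
    subst ha
    have hd : d = 1 - 2 * b := by linear_combination 2 * h₀₁
    subst hd
    have : b * (b - 1) = 0 := by linear_combination -h₁₁
    rcases mul_eq_zero.mp this with hb | hb
    · left; simp [hb]
    · right; norm_num [sub_eq_zero.mp hb]
  · rintro (⟨⟨rfl, rfl⟩, rfl, rfl⟩ | ⟨⟨rfl, rfl⟩, rfl, rfl⟩) <;> norm_num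

theorem stmt_8 (T : GL (Fin 2) ℝ) :
    glAct T (christoffel (-1) 0 (-1/2) 0 0 0) = christoffel (-1) 0 (-1/2) 0 0 0 ↔
      (T : Matrix (Fin 2) (Fin 2) ℝ) = 1 ∨
      (T : Matrix (Fin 2) (Fin 2) ℝ) = !![1, 1; 0, -1] := by
  obtain ⟨a, b, c, d, hT⟩ : ∃ a b c d, (T : Matrix (Fin 2) (Fin 2) ℝ) = !![a, b; c, d] :=
    ⟨_, _, _, _, eta_fin_two _⟩
  have hdet : a * d - b * c ≠ 0 := by simpa [hT] using T.det_ne_zero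
  rw [glAct_model_eq_self_iff, hT]
  exact smul_modelGram_eq_transpose_mul_mul_iff hdet
end
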